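/- arXiv:2012.09064 — 5 statements merged into one kernel-verified Lean document; each statement's English description precedes it below -/
import Mathlib

section
/- The map φ is Lipschitz-continuous on the unit simplex Δ^d: there exists a constant K > 0 such that for all m₁, m₂ ∈ Δ^d, ‖φ(m₁) − φ(m₂)‖ ≤ K·‖m₁ − m₂‖, where ‖·‖ is the sup-norm. In particular, φ is continuous on Δ^d (the affine pieces of φ agree on the boundaries between zones). -/
/-!
Write `g(m) = activeMass α m` for the mass of `m` that receives action 1: the first `α` of the
total mass, taken state by state in increasing order. In the zone of `s` it is `mᵢ` for `i < s`,
the remainder `α - ∑_{i<s} mᵢ` at `s` and `0` beyond, so `φ(m) = g(m) P¹ + (m - g(m)) P⁰` on the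
whole simplex. Each `gᵢ(m) = min(α, ∑_{k≤i} mₖ) - min(α, ∑_{k<i} mₖ)` is a difference of
truncated linear functionals, hence `g` is Lipschitz, and so is `φ` after composing with the
linear maps `v ↦ v P`.
-/

open Finset Matrix

theorem LipschitzWith.pi {α ι : Type*} [Fintype ι] {β : ι → Type*} [PseudoEMetricSpace α]
    [∀ i, PseudoEMetricSpace (β i)] {K : NNReal} {f : α → ∀ i, β i}
    (hf : ∀ i, LipschitzWith K fun x => f x i) : LipschitzWith K f :=
  fun x y => edist_pi_le_iff.2 fun i => hf i x y

theorem lipschitzWith_sum_apply {ι : Type*} [Fintype ι] (t : Finset ι) :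
    LipschitzWith (Fintype.card ι) fun m : ι → ℝ => ∑ k ∈ t, m k := by
  refine LipschitzWith.of_dist_le_mul fun m m' => ?_
  rw [Real.dist_eq, ← sum_sub_distrib]
  calc |∑ k ∈ t, (m k - m' k)| ≤ ∑ k ∈ t, |m k - m' k| := abs_sum_le_sum_abs _ _
    _ ≤ ∑ _k ∈ t, dist m m' := sum_le_sum fun k _ => dist_le_pi_dist m m' k
    _ = t.card * dist m m' := by rw [sum_const, nsmul_eq_mul]
    _ ≤ Fintype.card ι * dist m m' := by gcongr; exact card_le_univ t

section ActiveMass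

variable {ι : Type*} [Fintype ι] [LinearOrder ι]

def activeMass (α : ℝ) (m : ι → ℝ) (i : ι) : ℝ :=
  min α (∑ k ∈ univ.filter (· ≤ i), m k) - min α (∑ k ∈ univ.filter (· < i), m k)

theorem sum_filter_le_eq_add_sum_filter_lt {M : Type*} [AddCommMonoid M] (f : ι → M) (i : ι) :
    ∑ k ∈ univ.filter (· ≤ i), f k = f i + ∑ k ∈ univ.filter (· < i), f k := by
  have hinsert : univ.filter (· ≤ i) = insert i (univ.filter (· < i)) := by
    ext k
    simp [le_iff_lt_or_eq, or_comm]
  rw [hinsert, sum_insert (by simp)]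

theorem sum_eq_sum_filter_lt_add_add_sum_filter_gt {M : Type*} [AddCommMonoid M] (f : ι → M)
    (s : ι) :
    ∑ i, f i = ∑ i ∈ univ.filter (· < s), f i + f s + ∑ i ∈ univ.filter (s < ·), f i := by
  rw [← sum_filter_add_sum_filter_not univ (· ≤ s), sum_filter_le_eq_add_sum_filter_lt,
    add_comm (f s)]
  simp only [not_le]

theorem sum_filter_le_le_sum_filter_lt {m : ι → ℝ} (hm : ∀ k, 0 ≤ m k) {i j : ι} (hij : i < j) :
    ∑ k ∈ univ.filter (· ≤ i), m k ≤ ∑ k ∈ univ.filter (· < j), m k :=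
  sum_le_sum_of_subset_of_nonneg
    (fun k hk => mem_filter.2 ⟨mem_univ k, (mem_filter.1 hk).2.trans_lt hij⟩)
    fun k _ _ => hm k

variable {α : ℝ} {m : ι → ℝ} {s : ι}

theorem activeMass_of_lt (hm : ∀ k, 0 ≤ m k) (hs : ∑ k ∈ univ.filter (· < s), m k ≤ α) {i : ι}
    (hi : i < s) : activeMass α m i = m i := by
  have hle : ∑ k ∈ univ.filter (· ≤ i), m k ≤ α := (sum_filter_le_le_sum_filter_lt hm hi).trans hs
  rw [sum_filter_le_eq_add_sum_filter_lt] at hle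
  rw [activeMass, sum_filter_le_eq_add_sum_filter_lt, min_eq_right hle,
    min_eq_right (by linarith [hm i])]
  ring

theorem activeMass_self (hs : ∑ k ∈ univ.filter (· < s), m k ≤ α)
    (hs' : α ≤ ∑ k ∈ univ.filter (· ≤ s), m k) :
    activeMass α m s = α - ∑ k ∈ univ.filter (· < s), m k := by
  rw [activeMass, min_eq_left hs', min_eq_right hs]

theorem activeMass_of_gt (hm : ∀ k, 0 ≤ m k) (hs : α ≤ ∑ k ∈ univ.filter (· ≤ s), m k) {i : ι}
    (hi : s < i) : activeMass α m i = 0 := by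
  have hlt : α ≤ ∑ k ∈ univ.filter (· < i), m k := hs.trans (sum_filter_le_le_sum_filter_lt hm hi)
  have hle : α ≤ ∑ k ∈ univ.filter (· ≤ i), m k := by
    rw [sum_filter_le_eq_add_sum_filter_lt]
    linarith [hm i]
  rw [activeMass, min_eq_left hle, min_eq_left hlt, sub_self]

theorem lipschitzWith_activeMass (α : ℝ) :
    LipschitzWith (Fintype.card ι + Fintype.card ι) (activeMass (ι := ι) α) :=
  LipschitzWith.pi fun _ =>
    ((lipschitzWith_sum_apply _).const_min α).sub ((lipschitzWith_sum_apply _).const_min α)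

theorem eq_vecMul_activeMass {κ : Type*} (hm : ∀ k, 0 ≤ m k)
    (hs : ∑ k ∈ univ.filter (· < s), m k ≤ α) (hs' : α < ∑ k ∈ univ.filter (· ≤ s), m k)
    (P0 P1 : Matrix ι κ ℝ) (j : κ) :
    (∑ i ∈ univ.filter (· < s), m i * P1 i j)
        + (α - ∑ i ∈ univ.filter (· < s), m i) * P1 s j
        + ((∑ i ∈ univ.filter (· ≤ s), m i) - α) * P0 s j
        + ∑ i ∈ univ.filter (fun i => s < i), m i * P0 i j
      = (activeMass α m ᵥ* P1 + (m - activeMass α m) ᵥ* P0) j := by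
  have hlt : ∀ i ∈ univ.filter (· < s), activeMass α m i = m i := fun i hi =>
    activeMass_of_lt hm hs (mem_filter.1 hi).2
  have hgt : ∀ i ∈ univ.filter (s < ·), activeMass α m i = 0 := fun i hi =>
    activeMass_of_gt hm hs'.le (mem_filter.1 hi).2
  have hP1_lt : ∑ i ∈ univ.filter (· < s), activeMass α m i * P1 i j
      = ∑ i ∈ univ.filter (· < s), m i * P1 i j :=
    sum_congr rfl fun i hi => by rw [hlt i hi]
  have hP0_lt : ∑ i ∈ univ.filter (· < s), (m i - activeMass α m i) * P0 i j = 0 :=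
    sum_eq_zero fun i hi => by rw [hlt i hi, sub_self, zero_mul]
  have hP1_gt : ∑ i ∈ univ.filter (s < ·), activeMass α m i * P1 i j = 0 :=
    sum_eq_zero fun i hi => by rw [hgt i hi, zero_mul]
  have hP0_gt : ∑ i ∈ univ.filter (s < ·), (m i - activeMass α m i) * P0 i j
      = ∑ i ∈ univ.filter (s < ·), m i * P0 i j :=
    sum_congr rfl fun i hi => by rw [hgt i hi, sub_zero]
  simp only [Pi.add_apply, Matrix.vecMul, dotProduct, Pi.sub_apply]
  rw [sum_eq_sum_filter_lt_add_add_sum_filter_gt _ s,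
    sum_eq_sum_filter_lt_add_add_sum_filter_gt _ s, hP1_lt, hP0_lt, hP1_gt, hP0_gt,
    activeMass_self hs hs'.le, sum_filter_le_eq_add_sum_filter_lt]
  ring

end ActiveMass

theorem exists_lipschitzWith_vecMul_activeMass {ι κ : Type*} [Fintype ι] [LinearOrder ι]
    [Fintype κ] (α : ℝ) (P0 P1 : Matrix ι κ ℝ) :
    ∃ K, LipschitzWith K fun m : ι → ℝ => activeMass α m ᵥ* P1 + (m - activeMass α m) ᵥ* P0 := by
  have hvecMul : ∀ P : Matrix ι κ ℝ, ∃ K, LipschitzWith K fun v : ι → ℝ => v ᵥ* P := fun P =>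
    ⟨_, (LinearMap.toContinuousLinearMap (Matrix.vecMulLinear P)).lipschitz⟩
  obtain ⟨K0, hK0⟩ := hvecMul P0
  obtain ⟨K1, hK1⟩ := hvecMul P1
  have hg := lipschitzWith_activeMass (ι := ι) α
  exact ⟨_, (hK1.comp hg).add (hK0.comp (LipschitzWith.id.sub hg))⟩

theorem phi_lipschitz_general
    (d : ℕ) (α : ℝ)
    (P0 P1 : Matrix (Fin d) (Fin d) ℝ)
    (s : (Fin d → ℝ) → Fin d)
    (hs : ∀ m ∈ stdSimplex ℝ (Fin d),
      (∑ i ∈ univ.filter (· < s m), m i) ≤ α ∧ α < ∑ i ∈ univ.filter (· ≤ s m), m i)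
    (φ : (Fin d → ℝ) → (Fin d → ℝ))
    (hφ : ∀ m ∈ stdSimplex ℝ (Fin d), ∀ j,
      φ m j = (∑ i ∈ univ.filter (· < s m), m i * P1 i j)
        + (α - ∑ i ∈ univ.filter (· < s m), m i) * P1 (s m) j
        + ((∑ i ∈ univ.filter (· ≤ s m), m i) - α) * P0 (s m) j
        + ∑ i ∈ univ.filter (fun i => s m < i), m i * P0 i j) :
    ∃ K : ℝ, 0 < K ∧ ∀ m₁ ∈ stdSimplex ℝ (Fin d), ∀ m₂ ∈ stdSimplex ℝ (Fin d),
      ‖φ m₁ - φ m₂‖ ≤ K * ‖m₁ - m₂‖ := by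
  obtain ⟨K, hK⟩ := exists_lipschitzWith_vecMul_activeMass α P0 P1
  have hφ_eq : ∀ m ∈ stdSimplex ℝ (Fin d),
      φ m = activeMass α m ᵥ* P1 + (m - activeMass α m) ᵥ* P0 := fun m hm =>
    funext fun j => (hφ m hm j).trans
      (eq_vecMul_activeMass hm.1 (hs m hm).1 (hs m hm).2 P0 P1 j)
  refine ⟨K + 1, by positivity, fun m₁ hm₁ m₂ hm₂ => ?_⟩
  rw [hφ_eq m₁ hm₁, hφ_eq m₂ hm₂, ← dist_eq_norm, ← dist_eq_norm]
  exact (hK.dist_le_mul m₁ m₂).trans (by gcongr; linarith)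

/-- The mean-field map `φ` of the synchronous restless bandit model is
Lipschitz-continuous on the unit simplex for the sup-norm: there is a constant `K > 0` with
`‖φ(m₁) − φ(m₂)‖ ≤ K ‖m₁ − m₂‖` for all `m₁, m₂ ∈ Δ^d` (in particular `φ` is continuous, the
affine pieces agreeing on the zone boundaries). The sup-norm is the norm of `Fin d → ℝ`. -/
theorem phi_lipschitz
    (d : ℕ) (hd : 1 ≤ d) (α : ℝ) (hα : α ∈ Set.Ioo (0 : ℝ) 1)
    (P0 P1 : Matrix (Fin d) (Fin d) ℝ)
    (hP0nonneg : ∀ i j, 0 ≤ P0 i j) (hP0row : ∀ i, ∑ j, P0 i j = 1)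
    (hP1nonneg : ∀ i j, 0 ≤ P1 i j) (hP1row : ∀ i, ∑ j, P1 i j = 1)
    (s : (Fin d → ℝ) → Fin d)
    (hs : ∀ m ∈ stdSimplex ℝ (Fin d),
      (∑ i ∈ univ.filter (· < s m), m i) ≤ α ∧ α < ∑ i ∈ univ.filter (· ≤ s m), m i)
    (φ : (Fin d → ℝ) → (Fin d → ℝ))
    (hφ : ∀ m ∈ stdSimplex ℝ (Fin d), ∀ j,
      φ m j = (∑ i ∈ univ.filter (· < s m), m i * P1 i j)
        + (α - ∑ i ∈ univ.filter (· < s m), m i) * P1 (s m) j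
        + ((∑ i ∈ univ.filter (· ≤ s m), m i) - α) * P0 (s m) j
        + ∑ i ∈ univ.filter (fun i => s m < i), m i * P0 i j) :
    ∃ K : ℝ, 0 < K ∧ ∀ m₁ ∈ stdSimplex ℝ (Fin d), ∀ m₂ ∈ stdSimplex ℝ (Fin d),
      ‖φ m₁ - φ m₂‖ ≤ K * ‖m₁ - m₂‖ :=
  phi_lipschitz_general d α P0 P1 s hs φ hφ
end

section
/- Let A and B be d×d row-stochastic matrices that coincide on every row except possibly row s, and let m⁰, m¹ ∈ Δ^d be stationary distributions, i.e. m⁰·A = m⁰ and m¹·B = m¹, with m⁰_s > 0 and m¹_s > 0. For θ ∈ [0,1], let C be the row-stochastic matrix equal to A on all rows except row s, whose s-th row is (1−θ)·A_s + θ·B_s. Set p := (1−θ)m¹_s / (θ m⁰_s + (1−θ) m¹_s). Then m^θ := p·m⁰ + (1−p)·m¹ belongs to Δ^d and satisfies m^θ·C = m^θ, i.e. m^θ is a stationary distribution of C. -/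
open Finset

/-!
Split `m^θ = u + v` with `u = p m⁰` and `v = (1 - p) m¹`. The choice of `p` is exactly what makes
`m^θ_s (1 - θ) = u_s` and `m^θ_s θ = v_s`, so row `s` of `C` sends `m^θ_s` to
`u_s A_s + v_s B_s`. As `A` and `B` agree on all other rows, `m^θ C = u A + v B = u + v`.
-/

namespace Matrix

theorem vecMul_add_updateRow_smul_add_smul {ι R : Type*} [Fintype ι] [DecidableEq ι]
    [CommSemiring R] {A B : Matrix ι ι R} {s : ι} (hAB : ∀ i, i ≠ s → A i = B i)
    {u v : ι → R} {a b : R} (ha : (u + v) s * a = u s) (hb : (u + v) s * b = v s) :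
    vecMul (u + v) (A.updateRow s (a • A s + b • B s)) = vecMul u A + vecMul v B := by
  ext j
  have hterm : ∀ i, (u + v) i * A.updateRow s (a • A s + b • B s) i j
      = u i * A i j + v i * B i j := by
    intro i
    rw [updateRow_apply]
    split_ifs with hi
    · subst hi
      rw [← ha, ← hb]
      simp only [Pi.add_apply, Pi.smul_apply, smul_eq_mul]
      ring
    · rw [← hAB i hi, Pi.add_apply, add_mul]
  calc vecMul (u + v) (A.updateRow s (a • A s + b • B s)) j
      = ∑ i, (u + v) i * A.updateRow s (a • A s + b • B s) i j := rfl
    _ = ∑ i, (u i * A i j + v i * B i j) := sum_congr rfl fun i _ => hterm i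
    _ = (vecMul u A + vecMul v B) j := sum_add_distrib

end Matrix

theorem mix_mul_one_sub_and_mix_mul {K : Type*} [Field K] {θ x y p : K}
    (hD : θ * x + (1 - θ) * y ≠ 0) (hp : p = (1 - θ) * y / (θ * x + (1 - θ) * y)) :
    (p * x + (1 - p) * y) * (1 - θ) = p * x ∧ (p * x + (1 - p) * y) * θ = (1 - p) * y := by
  subst hp
  constructor <;> field_simp <;> ring

theorem interpolated_stationary_distribution_general
    (d : ℕ) (s : Fin d) (A B : Matrix (Fin d) (Fin d) ℝ)
    (hAB : ∀ i, i ≠ s → A i = B i)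
    (m0 m1 : Fin d → ℝ)
    (hm0 : m0 ∈ stdSimplex ℝ (Fin d)) (hm1 : m1 ∈ stdSimplex ℝ (Fin d))
    (hstat0 : Matrix.vecMul m0 A = m0) (hstat1 : Matrix.vecMul m1 B = m1)
    (hm0s : 0 < m0 s) (hm1s : 0 < m1 s)
    (θ : ℝ) (hθ : θ ∈ Set.Icc (0 : ℝ) 1)
    (C : Matrix (Fin d) (Fin d) ℝ)
    (hC : ∀ i j, C i j = if i = s then (1 - θ) * A s j + θ * B s j else A i j)
    (p : ℝ) (hp : p = (1 - θ) * m1 s / (θ * m0 s + (1 - θ) * m1 s))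
    (mθ : Fin d → ℝ) (hmθ : mθ = p • m0 + (1 - p) • m1) :
    mθ ∈ stdSimplex ℝ (Fin d) ∧ Matrix.vecMul mθ C = mθ := by
  have hD : 0 < θ * m0 s + (1 - θ) * m1 s :=
    convex_Ioi (0 : ℝ) hm0s hm1s hθ.1 (sub_nonneg.2 hθ.2) (by ring)
  have hp0 : 0 ≤ p := hp ▸ div_nonneg (mul_nonneg (sub_nonneg.2 hθ.2) hm1s.le) hD.le
  have hp1 : 0 ≤ 1 - p :=
    sub_nonneg.2 (hp ▸ (div_le_one hD).2 (by nlinarith [mul_nonneg hθ.1 hm0s.le]))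
  have hCrow : C = A.updateRow s ((1 - θ) • A s + θ • B s) := by
    ext i j
    simp [hC, Matrix.updateRow_apply]
  obtain ⟨hu, hv⟩ := mix_mul_one_sub_and_mix_mul hD.ne' hp
  subst hmθ
  refine ⟨convex_stdSimplex ℝ (Fin d) hm0 hm1 hp0 hp1 (by ring), ?_⟩
  rw [hCrow, Matrix.vecMul_add_updateRow_smul_add_smul hAB (by simpa using hu) (by simpa using hv),
    Matrix.smul_vecMul, Matrix.smul_vecMul, hstat0, hstat1]

/-- If `A`, `B` are row-stochastic matrices coinciding on every row except
possibly row `s`, `m⁰·A = m⁰` and `m¹·B = m¹` are stationary distributions with `m⁰_s > 0`,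
`m¹_s > 0`, and `C` is the row-stochastic matrix equal to `A` except that its `s`-th row is
`(1−θ)A_s + θB_s`, then with `p = (1−θ)m¹_s / (θ m⁰_s + (1−θ)m¹_s)` the convex combination
`m^θ = p m⁰ + (1−p) m¹` lies in the simplex and is a stationary distribution of `C`. -/
theorem interpolated_stationary_distribution
    (d : ℕ) (s : Fin d) (A B : Matrix (Fin d) (Fin d) ℝ)
    (hAnonneg : ∀ i j, 0 ≤ A i j) (hArow : ∀ i, ∑ j, A i j = 1)
    (hBnonneg : ∀ i j, 0 ≤ B i j) (hBrow : ∀ i, ∑ j, B i j = 1)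
    (hAB : ∀ i, i ≠ s → A i = B i)
    (m0 m1 : Fin d → ℝ)
    (hm0 : m0 ∈ stdSimplex ℝ (Fin d)) (hm1 : m1 ∈ stdSimplex ℝ (Fin d))
    (hstat0 : Matrix.vecMul m0 A = m0) (hstat1 : Matrix.vecMul m1 B = m1)
    (hm0s : 0 < m0 s) (hm1s : 0 < m1 s)
    (θ : ℝ) (hθ : θ ∈ Set.Icc (0 : ℝ) 1)
    (C : Matrix (Fin d) (Fin d) ℝ)
    (hC : ∀ i j, C i j = if i = s then (1 - θ) * A s j + θ * B s j else A i j)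
    (p : ℝ) (hp : p = (1 - θ) * m1 s / (θ * m0 s + (1 - θ) * m1 s))
    (mθ : Fin d → ℝ) (hmθ : mθ = p • m0 + (1 - p) • m1) :
    mθ ∈ stdSimplex ℝ (Fin d) ∧ Matrix.vecMul mθ C = mθ :=
  interpolated_stationary_distribution_general d s A B hAB m0 m1 hm0 hm1 hstat0 hstat1 hm0s hm1s θ
    hθ C hC p hp mθ hmθ
end

section
/- Let φ : Δ^d → Δ^d be K-Lipschitz with respect to the sup-norm (K > 0) with iterates Φ_t, and let (M(t))_{t∈ℕ} be a sequence of Δ^d-valued random vectors on a common probability space. Fix t ∈ ℕ, δ > 0 and p ∈ [0,1], and assume that for every s ∈ {0,…,t}, P(‖M(s+1) − φ(M(s))‖ ≥ δ) ≤ p. Then P( ‖M(t+1) − Φ_{t+1}(M(0))‖ ≥ (1 + K + K² + … + K^t)·δ ) ≤ (t+1)·p. -/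
/-!
On the event that every one-step error `‖M(s+1) − φ(M(s))‖` with `s ≤ t` is below `δ`, the
triangle inequality and the Lipschitz bound give `e(s+1) ≤ δ + K e(s)` for the distance
`e(s) = ‖M(s) − Φ_s(M(0))‖`, hence `e(t+1) < (1 + K + ⋯ + K^t) δ`. The bad event is therefore
contained in the union of the `t + 1` one-step bad events, and the union bound finishes.
-/

open Finset MeasureTheory

theorem dist_iterate_lt_geom_sum_mul {α : Type*} [PseudoMetricSpace α] {f : α → α}
    {s : Set α} {K δ : ℝ} (hf : Set.MapsTo f s s)
    (hlip : ∀ x ∈ s, ∀ y ∈ s, dist (f x) (f y) ≤ K * dist x y) (hK : 0 ≤ K)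
    {x : ℕ → α} (hx : ∀ n, x n ∈ s) (n : ℕ)
    (hstep : ∀ k ≤ n, dist (x (k + 1)) (f (x k)) < δ) :
    dist (x (n + 1)) (f^[n + 1] (x 0)) < (∑ i ∈ range (n + 1), K ^ i) * δ := by
  induction n with
  | zero => simpa using hstep 0 le_rfl
  | succ n ih =>
    have hprev := ih fun k hk => hstep k (hk.trans n.le_succ)
    have hcontract :
        dist (f (x (n + 1))) (f^[n + 2] (x 0)) ≤ K * dist (x (n + 1)) (f^[n + 1] (x 0)) := by
      rw [Function.iterate_succ_apply' f (n + 1)]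
      exact hlip _ (hx _) _ (hf.iterate (n + 1) (hx 0))
    calc dist (x (n + 2)) (f^[n + 2] (x 0))
        ≤ dist (x (n + 2)) (f (x (n + 1))) + dist (f (x (n + 1))) (f^[n + 2] (x 0)) :=
          dist_triangle _ _ _
      _ < δ + K * ((∑ i ∈ range (n + 1), K ^ i) * δ) :=
          add_lt_add_of_lt_of_le (hstep _ le_rfl)
            (hcontract.trans (mul_le_mul_of_nonneg_left hprev.le hK))
      _ = (∑ i ∈ range (n + 2), K ^ i) * δ := by rw [geom_sum_succ (n := n + 1)]; ring

theorem multistep_concentration_general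
    {Ω : Type} [MeasurableSpace Ω] (μ : Measure Ω)
    (d : ℕ) (φ : (Fin d → ℝ) → (Fin d → ℝ)) (K : ℝ) (hK : 0 < K)
    (hself : ∀ m ∈ stdSimplex ℝ (Fin d), φ m ∈ stdSimplex ℝ (Fin d))
    (hlip : ∀ m₁ ∈ stdSimplex ℝ (Fin d), ∀ m₂ ∈ stdSimplex ℝ (Fin d),
      ‖φ m₁ - φ m₂‖ ≤ K * ‖m₁ - m₂‖)
    (M : ℕ → Ω → (Fin d → ℝ)) (hMS : ∀ t ω, M t ω ∈ stdSimplex ℝ (Fin d))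
    (t : ℕ) (δ : ℝ) (p : ℝ)
    (hstep : ∀ s ≤ t,
      μ {ω | δ ≤ ‖M (s + 1) ω - φ (M s ω)‖} ≤ ENNReal.ofReal p) :
    μ {ω | (∑ s ∈ Finset.range (t + 1), K ^ s) * δ ≤ ‖M (t + 1) ω - φ^[t + 1] (M 0 ω)‖}
      ≤ ENNReal.ofReal ((t + 1) * p) := by
  have hsub : {ω | (∑ s ∈ range (t + 1), K ^ s) * δ ≤ ‖M (t + 1) ω - φ^[t + 1] (M 0 ω)‖}
      ⊆ ⋃ s ∈ range (t + 1), {ω | δ ≤ ‖M (s + 1) ω - φ (M s ω)‖} := by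
    intro ω hω
    by_contra hgood
    simp only [Set.mem_iUnion, mem_range, Set.mem_ofPred_eq, not_exists, not_le,
      ← dist_eq_norm] at hgood hω
    refine hω.not_gt (dist_iterate_lt_geom_sum_mul hself (fun a ha b hb => ?_) hK.le
      (hMS · ω) t fun s hs => hgood s (Nat.lt_succ_of_le hs))
    simpa only [dist_eq_norm] using hlip a ha b hb
  calc _ ≤ ∑ s ∈ range (t + 1), μ {ω | δ ≤ ‖M (s + 1) ω - φ (M s ω)‖} :=
        (measure_mono hsub).trans (measure_biUnion_finset_le _ _)
    _ ≤ ∑ s ∈ range (t + 1), ENNReal.ofReal p :=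
        sum_le_sum fun s hs => hstep s (Nat.lt_succ_iff.mp (mem_range.mp hs))
    _ = ENNReal.ofReal ((t + 1) * p) := by
        rw [sum_const, card_range, nsmul_eq_mul, ENNReal.ofReal_mul (by positivity)]
        norm_cast

/-- Multi-step concentration: if `φ : Δ^d → Δ^d` is `K`-Lipschitz for the
sup-norm with iterates `Φ_t = φ^[t]`, and `(M(t))` is a sequence of simplex-valued random
vectors whose one-step errors satisfy `P(‖M(s+1) − φ(M(s))‖ ≥ δ) ≤ p` for all `s ≤ t`, then
`P(‖M(t+1) − Φ_{t+1}(M(0))‖ ≥ (1 + K + ⋯ + K^t) δ) ≤ (t+1) p`. -/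
theorem multistep_concentration
    {Ω : Type} [MeasurableSpace Ω] (μ : Measure Ω) [IsProbabilityMeasure μ]
    (d : ℕ) (φ : (Fin d → ℝ) → (Fin d → ℝ)) (K : ℝ) (hK : 0 < K)
    (hself : ∀ m ∈ stdSimplex ℝ (Fin d), φ m ∈ stdSimplex ℝ (Fin d))
    (hlip : ∀ m₁ ∈ stdSimplex ℝ (Fin d), ∀ m₂ ∈ stdSimplex ℝ (Fin d),
      ‖φ m₁ - φ m₂‖ ≤ K * ‖m₁ - m₂‖)
    (M : ℕ → Ω → (Fin d → ℝ)) (hMS : ∀ t ω, M t ω ∈ stdSimplex ℝ (Fin d))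
    (t : ℕ) (δ : ℝ) (hδ : 0 < δ) (p : ℝ) (hp : p ∈ Set.Icc (0 : ℝ) 1)
    (hstep : ∀ s ≤ t,
      μ {ω | δ ≤ ‖M (s + 1) ω - φ (M s ω)‖} ≤ ENNReal.ofReal p) :
    μ {ω | (∑ s ∈ Finset.range (t + 1), K ^ s) * δ ≤ ‖M (t + 1) ω - φ^[t + 1] (M 0 ω)‖}
      ≤ ENNReal.ofReal ((t + 1) * p) :=
  multistep_concentration_general μ d φ K hK hself hlip M hMS t δ p hstep
end

section
/- Let φ : Δ^d → Δ^d be Lipschitz with respect to the sup-norm, with iterates Φ_t and fixed point m* ∈ Δ^d. Assume there exist r > 0 and a d×d real matrix K such that φ(m) = (m − m*)·K + m* for all m ∈ Δ^d with ‖m − m*‖ < r, and assume m* is a uniform global attractor of Φ. Then there exist constants b₁, b₂ > 0 such that for all t ∈ ℕ and all m ∈ Δ^d, ‖Φ_t(m) − m*‖ ≤ b₁·e^{−b₂·t}·‖m − m*‖. -/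
/-!
Near `m*` the map is affine, and an orbit starting close enough to `m*` never leaves the affine
zone (Lipschitz control for the first `T` steps, uniform attraction afterwards), so along it
`Φ_t(m) = m* + (m - m*) K^t`. Every displacement `m - m*` on the simplex is the combination
`∑ᵢ (m - m*)ᵢ (eᵢ - m*)`, with coefficients bounded by `‖m - m*‖`; applying uniform attraction to
the vertices `eᵢ` pulled towards `m*` therefore shows that `Φ_N` halves the distance to `m*` near
`m*`, and attraction alone does so far from it. Iterating `Φ_N` gives the exponential decay.
-/

open Set Finset

theorem half_pow_div_le_two_mul_exp (N t : ℕ) :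
    (1 / 2 : ℝ) ^ (t / N) ≤ 2 * Real.exp (-(Real.log 2 / N) * t) := by
  have hk : (t : ℝ) / N - 1 ≤ (t / N : ℕ) := by
    rw [← Nat.floor_div_eq_div (K := ℝ)]
    exact (Nat.sub_one_lt_floor _).le
  calc (1 / 2 : ℝ) ^ (t / N) = Real.exp (-((t / N : ℕ) * Real.log 2)) := by
        rw [Real.exp_neg, Real.exp_nat_mul, Real.exp_log two_pos, one_div, inv_pow]
    _ ≤ Real.exp (Real.log 2 + -(Real.log 2 / N) * t) := by
        have := mul_le_mul_of_nonneg_right hk (Real.log_pos one_lt_two).le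
        gcongr
        linarith [show Real.log 2 / N * t = (t : ℝ) / N * Real.log 2 by ring]
    _ = 2 * Real.exp (-(Real.log 2 / N) * t) := by rw [Real.exp_add, Real.exp_log two_pos]

section Iterates

variable {E : Type*} [SeminormedAddCommGroup E] {φ : E → E} {S : Set E} {x m : E} {L : ℝ}

def IsUniformAttractorOn (φ : E → E) (S : Set E) (x : E) : Prop :=
  ∀ ε : ℝ, 0 < ε → ∃ T : ℕ, ∀ t ≥ T, ∀ m ∈ S, ‖φ^[t] m - x‖ ≤ ε

theorem norm_iterate_sub_le_pow_mul (hS : MapsTo φ S S) (hL : 0 ≤ L)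
    (hφ : ∀ m ∈ S, ‖φ m - x‖ ≤ L * ‖m - x‖) (hm : m ∈ S) (t : ℕ) :
    ‖φ^[t] m - x‖ ≤ L ^ t * ‖m - x‖ := by
  induction t with
  | zero => simp
  | succ t ih =>
    rw [Function.iterate_succ_apply', pow_succ']
    calc ‖φ (φ^[t] m) - x‖ ≤ L * ‖φ^[t] m - x‖ := hφ _ (hS.iterate t hm)
      _ ≤ L * (L ^ t * ‖m - x‖) := mul_le_mul_of_nonneg_left ih hL
      _ = L * L ^ t * ‖m - x‖ := (mul_assoc ..).symm

theorem norm_iterate_sub_le_of_norm_sub_le {ε : ℝ} {T : ℕ} (hS : MapsTo φ S S) (hL : 1 ≤ L)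
    (hφ : ∀ m ∈ S, ‖φ m - x‖ ≤ L * ‖m - x‖) (hT : ∀ t ≥ T, ∀ m ∈ S, ‖φ^[t] m - x‖ ≤ ε)
    (hm : m ∈ S) (hmx : ‖m - x‖ ≤ ε / L ^ T) (t : ℕ) : ‖φ^[t] m - x‖ ≤ ε := by
  rcases le_or_gt T t with htT | htT
  · exact hT t htT m hm
  have hLT : 0 < L ^ T := pow_pos (by linarith) T
  calc ‖φ^[t] m - x‖ ≤ L ^ t * ‖m - x‖ := norm_iterate_sub_le_pow_mul hS (by linarith) hφ hm t
    _ ≤ L ^ T * (ε / L ^ T) := mul_le_mul (pow_le_pow_right₀ hL htT.le) hmx (norm_nonneg _) hLT.le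
    _ = ε := mul_div_cancel₀ ε hLT.ne'

theorem iterate_apply_eq_of_forall_iterate_mem {G : Type*} [AddGroup G] {φ A : G → G}
    {U : Set G} {x m : G} (hA : ∀ y ∈ U, φ y = A (y - x) + x) (hU : ∀ t, φ^[t] m ∈ U)
    (t : ℕ) : φ^[t] m = A^[t] (m - x) + x := by
  induction t with
  | zero => simp
  | succ t ih =>
    rw [Function.iterate_succ_apply', Function.iterate_succ_apply', hA _ (hU t), ih,
      add_sub_cancel_right]

theorem exists_forall_iterate_apply_eq_of_isUniformAttractorOn {A : E → E} {r : ℝ}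
    (hS : MapsTo φ S S) (hL : 1 ≤ L) (hφ : ∀ m ∈ S, ‖φ m - x‖ ≤ L * ‖m - x‖)
    (hattr : IsUniformAttractorOn φ S x) (hr : 0 < r)
    (hA : ∀ m ∈ S, ‖m - x‖ < r → φ m = A (m - x) + x) :
    ∃ c > 0, ∀ m ∈ S, ‖m - x‖ ≤ c → ∀ t, φ^[t] m = A^[t] (m - x) + x := by
  obtain ⟨T, hT⟩ := hattr (r / 2) (by positivity)
  refine ⟨r / 2 / L ^ T, by have := pow_pos (one_pos.trans_le hL) T; positivity, ?_⟩
  intro m hm hmx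
  refine iterate_apply_eq_of_forall_iterate_mem (U := {y | y ∈ S ∧ ‖y - x‖ < r})
    (fun y hy => hA y hy.1 hy.2) fun t => ⟨hS.iterate t hm, ?_⟩
  linarith [norm_iterate_sub_le_of_norm_sub_le hS hL hφ hT hm hmx t]

/-- The factor `L ^ N` pays for the last incomplete block of `N` steps, the `2` for rounding
`t / N` down. -/
theorem norm_iterate_sub_le_exp_of_iterate_contracts {N : ℕ} (hS : MapsTo φ S S) (hL : 1 ≤ L)
    (hφ : ∀ m ∈ S, ‖φ m - x‖ ≤ L * ‖m - x‖) (hN : 0 < N)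
    (hcontr : ∀ m ∈ S, ‖φ^[N] m - x‖ ≤ 1 / 2 * ‖m - x‖) (hm : m ∈ S) (t : ℕ) :
    ‖φ^[t] m - x‖ ≤ 2 * L ^ N * Real.exp (-(Real.log 2 / N) * t) * ‖m - x‖ := by
  have hL0 : 0 ≤ L := zero_le_one.trans hL
  have hblocks : ‖φ^[N * (t / N)] m - x‖ ≤ (1 / 2) ^ (t / N) * ‖m - x‖ := by
    rw [Function.iterate_mul]
    exact norm_iterate_sub_le_pow_mul (hS.iterate N) (by norm_num) hcontr hm _
  have hrest : ‖φ^[t] m - x‖ ≤ L ^ (t % N) * ‖φ^[N * (t / N)] m - x‖ := by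
    conv_lhs => rw [← Nat.mod_add_div t N, Function.iterate_add_apply]
    exact norm_iterate_sub_le_pow_mul hS hL0 hφ (hS.iterate _ hm) _
  calc ‖φ^[t] m - x‖ ≤ L ^ N * ((1 / 2) ^ (t / N) * ‖m - x‖) :=
        hrest.trans (mul_le_mul (pow_le_pow_right₀ hL (Nat.mod_lt t hN).le) hblocks
          (norm_nonneg _) (pow_nonneg hL0 N))
    _ ≤ L ^ N * (2 * Real.exp (-(Real.log 2 / N) * t) * ‖m - x‖) := by
        gcongr
        exact half_pow_div_le_two_mul_exp N t
    _ = 2 * L ^ N * Real.exp (-(Real.log 2 / N) * t) * ‖m - x‖ := by ring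

end Iterates

section Simplex

variable {ι : Type*} [Fintype ι] {F : Type*} [SeminormedAddCommGroup F] [NormedSpace ℝ F]

theorem sum_smul_single_sub_eq [DecidableEq ι] (x : ι → ℝ) {w : ι → ℝ}
    (hw : ∑ i, w i = 0) : ∑ i, w i • (Pi.single i 1 - x) = w := by
  simp only [smul_sub, sum_sub_distrib, ← sum_smul, hw, zero_smul, sub_zero]
  conv_rhs => rw [← Finset.univ_sum_single w]
  refine sum_congr rfl fun i _ => ?_
  rw [← Pi.single_smul', smul_eq_mul, mul_one]

theorem norm_le_card_mul_of_sum_eq_zero [DecidableEq ι] (A : (ι → ℝ) →ₗ[ℝ] F) (x : ι → ℝ)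
    {δ : ℝ} (hA : ∀ i, ‖A (Pi.single i 1 - x)‖ ≤ δ) {w : ι → ℝ} (hw : ∑ i, w i = 0) :
    ‖A w‖ ≤ Fintype.card ι * δ * ‖w‖ := by
  calc ‖A w‖ = ‖∑ i, w i • A (Pi.single i 1 - x)‖ := by
        conv_lhs => rw [← sum_smul_single_sub_eq x hw, map_sum]
        simp only [map_smul]
    _ ≤ ∑ _i : ι, ‖w‖ * δ := norm_sum_le_of_le _ fun i _ => by
        rw [norm_smul]
        exact mul_le_mul (norm_le_pi_norm w i) (hA i) (norm_nonneg _) (norm_nonneg w)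
    _ = Fintype.card ι * δ * ‖w‖ := by rw [sum_const, card_univ, nsmul_eq_mul]; ring

theorem norm_sub_le_one_of_mem_stdSimplex {m x : ι → ℝ} (hm : m ∈ stdSimplex ℝ ι)
    (hx : x ∈ stdSimplex ℝ ι) : ‖m - x‖ ≤ 1 := by
  rw [← dist_eq_norm]
  exact (Metric.dist_le_diam_of_mem (bounded_stdSimplex ι) hm hx).trans diam_stdSimplex_le

theorem norm_apply_sub_le_of_forall_norm_sub_le (A : (ι → ℝ) →ₗ[ℝ] F) {x m : ι → ℝ} {c ε : ℝ}
    (hx : x ∈ stdSimplex ℝ ι) (hc : 0 < c) (hc1 : c ≤ 1)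
    (hA : ∀ m ∈ stdSimplex ℝ ι, ‖m - x‖ ≤ c → ‖A (m - x)‖ ≤ ε) (hm : m ∈ stdSimplex ℝ ι) :
    ‖A (m - x)‖ ≤ Fintype.card ι * (ε / c) * ‖m - x‖ := by
  classical
  refine norm_le_card_mul_of_sum_eq_zero A x (fun i => ?_)
    (by simp only [Pi.sub_apply, sum_sub_distrib, hm.2, hx.2, sub_self])
  -- Test `A` on the vertex `eᵢ` pulled towards `x` to distance at most `c`.
  have hp := (convex_stdSimplex ℝ ι).add_smul_sub_mem hx (single_mem_stdSimplex ℝ i) ⟨hc.le, hc1⟩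
  have hpx : ‖x + c • (Pi.single i 1 - x) - x‖ ≤ c := by
    rw [add_sub_cancel_left, norm_smul, Real.norm_of_nonneg hc.le]
    exact mul_le_of_le_one_right hc.le
      (norm_sub_le_one_of_mem_stdSimplex (single_mem_stdSimplex ℝ i) hx)
  have := hA _ hp hpx
  rw [add_sub_cancel_left, map_smul, norm_smul, Real.norm_of_nonneg hc.le] at this
  rwa [le_div_iff₀' hc]

theorem exists_iterate_contracts_stdSimplex {φ : (ι → ℝ) → ι → ℝ} {x : ι → ℝ} {L r : ℝ}
    (A : Module.End ℝ (ι → ℝ)) (hS : MapsTo φ (stdSimplex ℝ ι) (stdSimplex ℝ ι)) (hL : 1 ≤ L)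
    (hφ : ∀ m ∈ stdSimplex ℝ ι, ‖φ m - x‖ ≤ L * ‖m - x‖)
    (hattr : IsUniformAttractorOn φ (stdSimplex ℝ ι) x) (hx : x ∈ stdSimplex ℝ ι) (hr : 0 < r)
    (hA : ∀ m ∈ stdSimplex ℝ ι, ‖m - x‖ < r → φ m = A (m - x) + x) :
    ∃ N > 0, ∀ m ∈ stdSimplex ℝ ι, ‖φ^[N] m - x‖ ≤ 1 / 2 * ‖m - x‖ := by
  obtain ⟨c, hc, hlin⟩ :=
    exists_forall_iterate_apply_eq_of_isUniformAttractorOn hS hL hφ hattr hr hA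
  set c' := min c 1
  have hc' : 0 < c' := lt_min hc one_pos
  set ε := c' / (2 * (Fintype.card ι + 1))
  have hε : Fintype.card ι * (ε / c') ≤ 1 / 2 := by
    simp only [ε]
    field_simp
    linarith
  obtain ⟨T, hT⟩ := hattr ε (by positivity)
  have hlin' : ∀ m ∈ stdSimplex ℝ ι, ‖m - x‖ ≤ c' → φ^[T + 1] m - x = (A ^ (T + 1)) (m - x) :=
    fun m hm hmc => by
      rw [hlin m hm (hmc.trans (min_le_left c 1)), add_sub_cancel_right, Module.End.coe_pow]
  refine ⟨T + 1, T.succ_pos, fun m hm => ?_⟩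
  rcases le_or_gt ‖m - x‖ c' with hnear | hfar
  · rw [hlin' m hm hnear]
    refine (norm_apply_sub_le_of_forall_norm_sub_le _ hx hc' (min_le_right c 1) (fun p hp hpx => ?_)
      hm).trans (mul_le_mul_of_nonneg_right hε (norm_nonneg _))
    rw [← hlin' p hp hpx]
    exact hT _ T.le_succ p hp
  · calc ‖φ^[T + 1] m - x‖ ≤ ε := hT _ T.le_succ m hm
      _ ≤ c' / 2 := div_le_div_of_nonneg_left hc'.le two_pos
          (by linarith [(Fintype.card ι).cast_nonneg (α := ℝ)])
      _ ≤ 1 / 2 * ‖m - x‖ := by linarith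

end Simplex

theorem exponential_stability_of_attractor_general
    (d : ℕ) (φ : (Fin d → ℝ) → (Fin d → ℝ))
    (L : ℝ)
    (hself : ∀ m ∈ stdSimplex ℝ (Fin d), φ m ∈ stdSimplex ℝ (Fin d))
    (hlip : ∀ m₁ ∈ stdSimplex ℝ (Fin d), ∀ m₂ ∈ stdSimplex ℝ (Fin d),
      ‖φ m₁ - φ m₂‖ ≤ L * ‖m₁ - m₂‖)
    (mstar : Fin d → ℝ) (hmstarS : mstar ∈ stdSimplex ℝ (Fin d))
    (hfix : φ mstar = mstar)
    (r : ℝ) (hr : 0 < r) (K : Matrix (Fin d) (Fin d) ℝ)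
    (haff : ∀ m ∈ stdSimplex ℝ (Fin d), ‖m - mstar‖ < r →
      φ m = Matrix.vecMul (m - mstar) K + mstar)
    (hattr : ∀ ε : ℝ, 0 < ε → ∃ T : ℕ, ∀ t ≥ T, ∀ m ∈ stdSimplex ℝ (Fin d),
      ‖φ^[t] m - mstar‖ ≤ ε) :
    ∃ b₁ b₂ : ℝ, 0 < b₁ ∧ 0 < b₂ ∧ ∀ t : ℕ, ∀ m ∈ stdSimplex ℝ (Fin d),
      ‖φ^[t] m - mstar‖ ≤ b₁ * Real.exp (-b₂ * t) * ‖m - mstar‖ := by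
  have hL : 1 ≤ max L 1 := le_max_right L 1
  have hφ : ∀ m ∈ stdSimplex ℝ (Fin d), ‖φ m - mstar‖ ≤ max L 1 * ‖m - mstar‖ := fun m hm =>
    calc ‖φ m - mstar‖ = ‖φ m - φ mstar‖ := by rw [hfix]
      _ ≤ L * ‖m - mstar‖ := hlip m hm mstar hmstarS
      _ ≤ max L 1 * ‖m - mstar‖ := by gcongr; exact le_max_left L 1
  obtain ⟨N, hN, hcontr⟩ := exists_iterate_contracts_stdSimplex (Matrix.vecMulLinear K) hself hL
    hφ hattr hmstarS hr haff
  refine ⟨2 * max L 1 ^ N, Real.log 2 / N, by positivity,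
    div_pos (Real.log_pos one_lt_two) (Nat.cast_pos.2 hN), fun t m hm => ?_⟩
  exact norm_iterate_sub_le_exp_of_iterate_contracts hself hL hφ hN hcontr hm t

/-- Exponential stability of a non-singular uniform global attractor: if
`φ : Δ^d → Δ^d` is Lipschitz for the sup-norm, coincides with the affine map
`m ↦ (m − m*)·K + m*` on a ball of radius `r` around its fixed point `m*`, and `m*` is a
uniform global attractor of the iterates `Φ_t = φ^[t]`, then there are `b₁, b₂ > 0` with
`‖Φ_t(m) − m*‖ ≤ b₁ e^{−b₂ t} ‖m − m*‖` for all `t ∈ ℕ` and `m ∈ Δ^d`. -/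
theorem exponential_stability_of_attractor
    (d : ℕ) (φ : (Fin d → ℝ) → (Fin d → ℝ))
    (L : ℝ) (hL : 0 < L)
    (hself : ∀ m ∈ stdSimplex ℝ (Fin d), φ m ∈ stdSimplex ℝ (Fin d))
    (hlip : ∀ m₁ ∈ stdSimplex ℝ (Fin d), ∀ m₂ ∈ stdSimplex ℝ (Fin d),
      ‖φ m₁ - φ m₂‖ ≤ L * ‖m₁ - m₂‖)
    (mstar : Fin d → ℝ) (hmstarS : mstar ∈ stdSimplex ℝ (Fin d))
    (hfix : φ mstar = mstar)
    (r : ℝ) (hr : 0 < r) (K : Matrix (Fin d) (Fin d) ℝ)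
    (haff : ∀ m ∈ stdSimplex ℝ (Fin d), ‖m - mstar‖ < r →
      φ m = Matrix.vecMul (m - mstar) K + mstar)
    (hattr : ∀ ε : ℝ, 0 < ε → ∃ T : ℕ, ∀ t ≥ T, ∀ m ∈ stdSimplex ℝ (Fin d),
      ‖φ^[t] m - mstar‖ ≤ ε) :
    ∃ b₁ b₂ : ℝ, 0 < b₁ ∧ 0 < b₂ ∧ ∀ t : ℕ, ∀ m ∈ stdSimplex ℝ (Fin d),
      ‖φ^[t] m - mstar‖ ≤ b₁ * Real.exp (-b₂ * t) * ‖m - mstar‖ :=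
  exponential_stability_of_attractor_general d φ L hself hlip mstar hmstarS hfix r hr K haff hattr
end

section
/- Let X_N be a Binomial(N, 1/2) random variable for each N ∈ ℕ. Then lim_{N→∞} (1/√N)·E[ max(N/2 − X_N, 0) ] = (1/2)·E[max(G, 0)] = 1/(2√(2π)), where G is a standard normal random variable. Consequently, for the two-state bandit example with P^0 = P^1 = [[1/2,1/2],[1/2,1/2]], rewards R^0 = (0,0), R^1 = (1,0) and α = 1/2, the optimality gap of the Whittle index policy decays only at rate Θ(√N) and not exponentially: the fixed point in this example is singular. -/
/-!
Telescoping with `(k + 1) C(N, k + 1) - k C(N, k) = C(N, k) (N - 2k)` gives the closed form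
`E[(N/2 - X_N)⁺] = m C(N, m) / 2^(N+1)` with `m = ⌈N/2⌉`. Squared and divided by `N`, this is
expressed along even and along odd `N` through the Wallis product
`W r = 16^r / ((2r + 1) C(2r, r)^2)`, and `W r → π/2` makes both subsequences tend to `1/(8π)`.
On the Gaussian side, `E[G⁺] = (2π)^(-1/2) ∫₀^∞ x e^(-x²/2) dx = (2π)^(-1/2)`.
-/

open Finset Filter Real MeasureTheory ProbabilityTheory Topology

theorem integral_Ioi_mul_exp_neg_mul_sq {b : ℝ} (hb : 0 < b) :
    ∫ x in Set.Ioi (0 : ℝ), x * exp (-b * x ^ 2) = (2 * b)⁻¹ := by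
  have h := integral_mul_cexp_neg_mul_sq (b := (b : ℂ)) (by simpa using hb)
  rw [← Complex.ofReal_inj, ← integral_complex_ofReal]
  push_cast
  exact h

theorem integral_max_zero_gaussianReal {v : NNReal} (hv : v ≠ 0) :
    ∫ x, max x 0 ∂gaussianReal 0 v = √v / √(2 * π) := by
  have hv' : (0 : ℝ) < v := by positivity
  rw [integral_gaussianReal_eq_integral_smul hv,
    ← setIntegral_eq_integral_of_forall_compl_eq_zero (s := Set.Ioi 0)
      (fun x hx => by rw [max_eq_right (not_lt.1 hx), smul_zero])]
  calc ∫ x in Set.Ioi (0 : ℝ), gaussianPDFReal 0 v x • max x 0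
      = ∫ x in Set.Ioi (0 : ℝ), (√(2 * π * v))⁻¹ * (x * exp (-(2 * (v : ℝ))⁻¹ * x ^ 2)) := by
        refine setIntegral_congr_fun measurableSet_Ioi fun x (hx : 0 < x) => ?_
        simp only [gaussianPDFReal, smul_eq_mul, max_eq_left hx.le, sub_zero]
        ring_nf
    _ = √v / √(2 * π) := by
        rw [integral_const_mul, integral_Ioi_mul_exp_neg_mul_sq (by positivity),
          sqrt_mul (by positivity)]
        field_simp
        rw [sq_sqrt hv'.le]

theorem sum_range_choose_mul_sub_two_mul (N m : ℕ) :
    ∑ k ∈ range m, (N.choose k : ℝ) * (N - 2 * k) = m * N.choose m := by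
  induction m with
  | zero => simp
  | succ m ih =>
    have hstep : ((m + 1 : ℕ) : ℝ) * N.choose (m + 1) = N.choose m * (N - m) := by
      rcases le_or_gt m N with hm | hm
      · rw [mul_comm, ← Nat.cast_sub hm]
        exact_mod_cast Nat.choose_succ_right_eq N m
      · simp [Nat.choose_eq_zero_of_lt hm, Nat.choose_eq_zero_of_lt (Nat.lt_succ_of_lt hm)]
    rw [sum_range_succ, ih, hstep]
    ring

theorem Real.Wallis.W_mul_centralBinom_sq (r : ℕ) :
    W r * (2 * r + 1) * (r.centralBinom : ℝ) ^ 2 = 2 ^ (4 * r) := by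
  have hfact : ((2 * r).factorial : ℝ) = r.centralBinom * r.factorial ^ 2 := by
    rw [Nat.centralBinom_eq_two_mul_choose, two_mul, ← Nat.add_choose_mul_factorial_mul_factorial]
    push_cast
    ring
  have := r.centralBinom_ne_zero
  rw [W_eq_factorial_ratio, hfact]
  field_simp

theorem Filter.tendsto_atTop_of_even_of_odd {α : Type*} {f : ℕ → α} {l : Filter α}
    (heven : Tendsto (fun n => f (2 * n)) atTop l)
    (hodd : Tendsto (fun n => f (2 * n + 1)) atTop l) : Tendsto f atTop l := by
  intro s hs
  obtain ⟨a, ha⟩ := eventually_atTop.1 (heven hs)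
  obtain ⟨b, hb⟩ := eventually_atTop.1 (hodd hs)
  refine eventually_atTop.2 ⟨2 * (a + b), fun n hn => ?_⟩
  obtain ⟨k, rfl | rfl⟩ := Nat.even_or_odd' n
  exacts [ha k (by omega), hb k (by omega)]

/-- `E[(N/2 - X)⁺]` for `X ~ Binomial(N, 1/2)`. -/
noncomputable def expectedShortfall (N : ℕ) : ℝ :=
  ∑ k ∈ range (N + 1), (N.choose k : ℝ) * (1 / 2) ^ N * max ((N : ℝ) / 2 - k) 0

theorem expectedShortfall_nonneg (N : ℕ) : 0 ≤ expectedShortfall N := by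
  unfold expectedShortfall
  positivity

theorem expectedShortfall_eq (N : ℕ) :
    expectedShortfall N = ((N + 1) / 2 : ℕ) * N.choose ((N + 1) / 2) / 2 ^ (N + 1) := by
  set m := (N + 1) / 2
  have hsub : range m ⊆ range (N + 1) := range_subset_range.2 (by omega)
  rw [expectedShortfall, ← sum_subset hsub fun k _ hk => ?_, ← sum_range_choose_mul_sub_two_mul,
    sum_div]
  · refine sum_congr rfl fun k hk => ?_
    have hk : 2 * (k : ℝ) ≤ N := by
      have := mem_range.1 hk
      exact_mod_cast (by omega : 2 * k ≤ N)
    rw [max_eq_left (by linarith), one_div, inv_pow]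
    field_simp
    ring
  · have hk : (N : ℝ) ≤ 2 * k := by
      have := mem_range.not.1 hk
      exact_mod_cast (by omega : N ≤ 2 * k)
    rw [max_eq_right (by linarith), mul_zero]

theorem expectedShortfall_two_mul_div_sqrt_sq (r : ℕ) :
    (expectedShortfall (2 * r) / √(2 * r : ℕ)) ^ 2 = r / (2 * r + 1) / (8 * Wallis.W r) := by
  rcases eq_or_ne r 0 with rfl | hr
  · simp
  have hW := Wallis.W_mul_centralBinom_sq r
  have := Wallis.W_pos r
  rw [expectedShortfall_eq, show (2 * r + 1) / 2 = r by omega,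
    ← Nat.centralBinom_eq_two_mul_choose, div_pow, sq_sqrt (by positivity)]
  field_simp
  push_cast
  linear_combination 8 * (r : ℝ) * hW

theorem expectedShortfall_two_mul_add_one_div_sqrt_sq (r : ℕ) :
    (expectedShortfall (2 * r + 1) / √(2 * r + 1 : ℕ)) ^ 2 = 1 / (16 * Wallis.W r) := by
  have hW := Wallis.W_mul_centralBinom_sq r
  have := Wallis.W_pos r
  have hchoose : ((r + 1 : ℕ) : ℝ) * (2 * r + 1).choose (r + 1) =
      (2 * r + 1) * r.centralBinom := by
    rw [Nat.centralBinom_eq_two_mul_choose, mul_comm, mul_comm (2 * (r : ℝ) + 1)]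
    exact_mod_cast (Nat.add_one_mul_choose_eq (2 * r) r).symm.trans (mul_comm _ _)
  rw [expectedShortfall_eq, show (2 * r + 1 + 1) / 2 = r + 1 by omega, hchoose,
    div_pow, sq_sqrt (by positivity)]
  field_simp
  push_cast
  linear_combination 16 * (2 * (r : ℝ) + 1) * hW

theorem tendsto_expectedShortfall_div_sqrt :
    Tendsto (fun N => expectedShortfall N / √N) atTop (𝓝 (1 / (2 * √(2 * π)))) := by
  have hW := Wallis.tendsto_W_nhds_pi_div_two
  have hsq : Tendsto (fun N => (expectedShortfall N / √N) ^ 2) atTop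
      (𝓝 ((1 / (2 * √(2 * π))) ^ 2)) := by
    refine tendsto_atTop_of_even_of_odd ?_ ?_
    · have hL : (1 / (2 * √(2 * π))) ^ 2 = 1 / 2 / (8 * (π / 2)) := by
        rw [div_pow, mul_pow, sq_sqrt (by positivity)]
        ring
      simp_rw [expectedShortfall_two_mul_div_sqrt_sq, hL]
      exact Stirling.tendsto_self_div_two_mul_self_add_one.div (hW.const_mul 8) (by positivity)
    · have hL : (1 / (2 * √(2 * π))) ^ 2 = 1 / (16 * (π / 2)) := by
        rw [div_pow, mul_pow, sq_sqrt (by positivity)]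
        ring
      simp_rw [expectedShortfall_two_mul_add_one_div_sqrt_sq, hL]
      exact tendsto_const_nhds.div (hW.const_mul 16) (by positivity)
  have hsqrt := (continuous_sqrt.tendsto _).comp hsq
  rw [Function.comp_def, sqrt_sq (by positivity)] at hsqrt
  exact hsqrt.congr fun N => sqrt_sq (div_nonneg (expectedShortfall_nonneg N) (sqrt_nonneg _))

/-- (Remark 3.3 of the paper: the singular case.) If `X_N` is a
`Binomial(N, 1/2)` random variable, then
`lim_{N→∞} E[max(N/2 − X_N, 0)]/√N = (1/2)·E[max(G,0)] = 1/(2√(2π))`, where `G` is standard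
normal. Here `E[max(N/2 − X_N, 0)] = ∑_{k=0}^{N} C(N,k) (1/2)^N max(N/2 − k, 0)`, and
`E[max(G,0)]` is the integral of `max(x,0)` against the standard Gaussian measure. In the
two-state singular bandit example this quantity is the optimality gap of the Whittle index
policy, so the gap decays only at rate `Θ(√N)` rather than exponentially. -/
theorem singular_example_sqrtN_rate :
    Tendsto
      (fun N : ℕ =>
        (∑ k ∈ Finset.range (N + 1),
            (N.choose k : ℝ) * (1 / 2) ^ N * max ((N : ℝ) / 2 - k) 0) / Real.sqrt N)
      atTop
      (nhds ((1 / 2) * ∫ x, max x 0 ∂(ProbabilityTheory.gaussianReal 0 1)))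
    ∧ (1 / 2) * ∫ x, max x 0 ∂(ProbabilityTheory.gaussianReal 0 1)
        = 1 / (2 * Real.sqrt (2 * Real.pi)) := by
  have hmean : (1 / 2) * ∫ x, max x 0 ∂(gaussianReal 0 1) = 1 / (2 * √(2 * π)) := by
    rw [integral_max_zero_gaussianReal one_ne_zero, NNReal.coe_one, sqrt_one]
    ring
  exact ⟨hmean ▸ tendsto_expectedShortfall_div_sqrt, hmean⟩
end
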